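/- Let X be a real random variable with characteristic function φ, and let a ∈ ℝ with P(X = a) = 0. Then for every real t, (1/(4π i))·∫_ℝ [exp(−i·a·η)·φ(t+η) − exp(i·a·η)·φ(t−η)]/η dη = ½·E[exp(i·t·X)·sgn(X − a)], where the integral is understood as a principal value. -/

import Mathlib

/-!
Writing `φ` as an expectation, the integrand at `η` equals `2i·E[e^{itX} sin(η(X - a))/η]`.
On the annulus `ε ≤ |η| ≤ A` the integrand is bounded, so Fubini turns the integral into
`4i·E[e^{itX} (Si(A(X - a)) - Si(ε(X - a)))]`, where `Si x = ∫₀ˣ sin u / u du`.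
The sine integral is bounded and tends to `±π/2` at `±∞` (Dirichlet's integral, evaluated by
writing `1/x = ∫₀^∞ e^{-xt} dt` and integrating `e^{-xt} sin x` in `x` first), so dominated
convergence yields the limit `2πi·E[e^{itX} sgn(X - a)]`.
-/

open MeasureTheory Filter Set Topology Complex

noncomputable def sineIntegral (x : ℝ) : ℝ := ∫ u in (0 : ℝ)..x, Real.sinc u

@[fun_prop]
lemma continuous_sineIntegral : Continuous sineIntegral :=
  intervalIntegral.continuous_primitive (fun _ _ => Real.continuous_sinc.intervalIntegrable _ _) 0

lemma sineIntegral_neg (x : ℝ) : sineIntegral (-x) = -sineIntegral x := by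
  have h := intervalIntegral.integral_comp_neg (a := 0) (b := x) Real.sinc
  simp only [Real.sinc_neg, neg_zero] at h
  rw [sineIntegral, sineIntegral, h, intervalIntegral.integral_symm]

lemma abs_sineIntegral_le_abs (x : ℝ) : |sineIntegral x| ≤ |x| := by
  simpa [sineIntegral] using intervalIntegral.norm_integral_le_of_norm_le_const (a := 0) (b := x)
    (C := 1) (f := Real.sinc) fun u _ => by simpa using Real.abs_sinc_le_one u

lemma integral_exp_neg_mul_Ioi {x : ℝ} (hx : 0 < x) :
    ∫ t in Ioi (0 : ℝ), Real.exp (-x * t) = x⁻¹ := by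
  simpa [neg_div] using integral_exp_mul_Ioi (neg_neg_of_pos hx) 0

lemma integrable_exp_neg_mul_mul_sin (A : ℝ) :
    Integrable (fun p : ℝ × ℝ => Real.exp (-p.1 * p.2) * Real.sin p.1)
      ((volume.restrict (Ioc 0 A)).prod (volume.restrict (Ioi 0))) := by
  have hmeas : AEStronglyMeasurable (fun p : ℝ × ℝ => Real.exp (-p.1 * p.2) * Real.sin p.1)
      ((volume.restrict (Ioc 0 A)).prod (volume.restrict (Ioi 0))) := by fun_prop
  rw [integrable_prod_iff hmeas]
  refine ⟨?_, (integrable_const (1 : ℝ)).mono' hmeas.norm.integral_prod_right' ?_⟩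
  · filter_upwards [ae_restrict_mem measurableSet_Ioc] with x hx
    exact (exp_neg_integrableOn_Ioi 0 hx.1).mul_const _
  · filter_upwards [ae_restrict_mem measurableSet_Ioc] with x hx
    obtain ⟨hx, -⟩ := hx
    have hsin : |Real.sin x| ≤ x := Real.abs_sin_le_abs.trans_eq (abs_of_pos hx)
    simp only [norm_mul, Real.norm_eq_abs, Real.abs_exp, integral_mul_const,
      integral_exp_neg_mul_Ioi hx, abs_abs]
    rw [abs_of_nonneg (by positivity)]
    calc x⁻¹ * |Real.sin x| ≤ x⁻¹ * x := by gcongr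
      _ = 1 := inv_mul_cancel₀ hx.ne'

lemma I_sub_ofReal_ne_zero (t : ℝ) : I - t ≠ 0 :=
  fun h => by simpa using congrArg Complex.im h

lemma integral_exp_neg_mul_mul_sin (t : ℝ) {A : ℝ} (hA : 0 ≤ A) :
    ∫ x in Ioc 0 A, Real.exp (-x * t) * Real.sin x
      = (1 + t ^ 2)⁻¹ + (cexp ((I - t) * A) / (I - t)).im := by
  have hpt : ∀ x : ℝ, Real.exp (-x * t) * Real.sin x = (cexp ((I - t) * x)).im := by
    intro x
    rw [Complex.exp_im]
    simp [mul_comm x t]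
  have hnormSq : Complex.normSq (I - t) = 1 + t ^ 2 := by
    simp [Complex.normSq_apply]; ring
  simp_rw [hpt]
  have := Complex.imCLM.intervalIntegral_comp_comm (a := 0) (b := A) (μ := volume)
    (f := fun x : ℝ => cexp ((I - t) * x)) ((by fun_prop : Continuous _).intervalIntegrable _ _)
  simp only [Complex.imCLM_apply] at this
  rw [← intervalIntegral.integral_of_le hA, this,
    integral_exp_mul_complex (I_sub_ofReal_ne_zero t), sub_div, Complex.sub_im]
  simp [hnormSq]
  ring

lemma abs_im_cexp_div_le (A t : ℝ) :
    |(cexp ((I - t) * A) / (I - t)).im| ≤ Real.exp (-A * t) := by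
  have hnum : ‖cexp ((I - t) * A)‖ = Real.exp (-A * t) := by
    rw [Complex.norm_exp]; simp; ring
  have hden : 1 ≤ ‖I - t‖ := by simpa using Complex.abs_im_le_norm (I - t)
  calc |(cexp ((I - t) * A) / (I - t)).im| ≤ ‖cexp ((I - t) * A) / (I - t)‖ :=
        Complex.abs_im_le_norm _
    _ ≤ Real.exp (-A * t) := by
        rw [norm_div, hnum]; exact div_le_self (Real.exp_nonneg _) hden

lemma sineIntegral_eq_integral_Ioi {A : ℝ} (hA : 0 ≤ A) :
    sineIntegral A = ∫ t in Ioi 0, ∫ x in Ioc 0 A, Real.exp (-x * t) * Real.sin x := by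
  rw [← integral_integral_swap (integrable_exp_neg_mul_mul_sin A), sineIntegral,
    intervalIntegral.integral_of_le hA]
  refine setIntegral_congr_fun measurableSet_Ioc fun x hx => ?_
  rw [integral_mul_const, integral_exp_neg_mul_Ioi hx.1, Real.sinc_of_ne_zero hx.1.ne',
    inv_mul_eq_div]

lemma abs_sineIntegral_sub_pi_div_two_le {A : ℝ} (hA : 0 < A) :
    |sineIntegral A - Real.pi / 2| ≤ A⁻¹ := by
  have hexp : IntegrableOn (fun t => Real.exp (-A * t)) (Ioi 0) := exp_neg_integrableOn_Ioi 0 hA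
  have hrem : IntegrableOn (fun t : ℝ => (cexp ((I - t) * A) / (I - t)).im) (Ioi 0) :=
    hexp.mono' (Continuous.aestronglyMeasurable <| Complex.continuous_im.comp <|
      (by fun_prop : Continuous _).div (by fun_prop) I_sub_ofReal_ne_zero)
      (ae_of_all _ fun t => abs_im_cexp_div_le A t)
  have hSi : sineIntegral A - Real.pi / 2
      = ∫ t in Ioi (0 : ℝ), (cexp ((I - t) * A) / (I - t)).im := by
    rw [sineIntegral_eq_integral_Ioi hA.le,
      setIntegral_congr_fun measurableSet_Ioi fun t _ => integral_exp_neg_mul_mul_sin t hA.le,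
      integral_add integrable_inv_one_add_sq.integrableOn hrem, integral_Ioi_inv_one_add_sq]
    simp
  rw [hSi, ← integral_exp_neg_mul_Ioi hA]
  exact norm_integral_le_of_norm_le (f := fun t : ℝ => (cexp ((I - t) * A) / (I - t)).im) hexp
    (ae_of_all _ fun t => abs_im_cexp_div_le A t)

lemma tendsto_sineIntegral_atTop : Tendsto sineIntegral atTop (𝓝 (Real.pi / 2)) := by
  refine tendsto_iff_dist_tendsto_zero.2 (squeeze_zero' (.of_forall fun _ => dist_nonneg) ?_
    tendsto_inv_atTop_zero)
  filter_upwards [eventually_gt_atTop 0] with A hA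
  exact abs_sineIntegral_sub_pi_div_two_le hA

lemma abs_sineIntegral_le (x : ℝ) : |sineIntegral x| ≤ 3 := by
  have hpos : ∀ y, 0 ≤ y → |sineIntegral y| ≤ 3 := by
    intro y hy
    rcases le_or_gt y 1 with hy1 | hy1
    · linarith [abs_sineIntegral_le_abs y, abs_of_nonneg hy]
    · calc |sineIntegral y| ≤ |sineIntegral y - Real.pi / 2| + Real.pi / 2 := by
            have := abs_sub_abs_le_abs_sub (sineIntegral y) (Real.pi / 2)
            rw [abs_of_pos Real.pi_div_two_pos] at this
            linarith
        _ ≤ 1 + 2 := by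
            gcongr
            · exact (abs_sineIntegral_sub_pi_div_two_le (by linarith)).trans
                (inv_le_one_of_one_le₀ hy1.le)
            · linarith [Real.pi_le_four]
        _ = 3 := by norm_num
  rcases le_total 0 x with hx | hx
  · exact hpos x hx
  · simpa [sineIntegral_neg, abs_neg] using hpos (-x) (neg_nonneg.2 hx)

lemma tendsto_sineIntegral_mul_atTop (b : ℝ) :
    Tendsto (fun A => sineIntegral (A * b)) atTop (𝓝 (Real.pi / 2 * Real.sign b)) := by
  rcases lt_trichotomy b 0 with hb | rfl | hb
  · have h := (tendsto_sineIntegral_atTop.comp (tendsto_id.atTop_mul_const (neg_pos.2 hb))).neg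
    simpa [Function.comp_def, sineIntegral_neg, Real.sign_of_neg hb] using h
  · simp [sineIntegral]
  · simpa [Function.comp_def, Real.sign_of_pos hb] using
      tendsto_sineIntegral_atTop.comp (tendsto_id.atTop_mul_const hb)

lemma tendsto_sineIntegral_sub_sineIntegral (b : ℝ) :
    Tendsto (fun p : ℝ × ℝ => sineIntegral (p.2 * b) - sineIntegral (p.1 * b))
      (𝓝 0 ×ˢ atTop) (𝓝 (Real.pi / 2 * Real.sign b)) := by
  have hε : Tendsto (fun ε => sineIntegral (ε * b)) (𝓝 0) (𝓝 0) := by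
    simpa [Function.comp_def, sineIntegral] using
      (continuous_sineIntegral.comp (continuous_mul_const b)).tendsto 0
  simpa using ((tendsto_sineIntegral_mul_atTop b).comp tendsto_snd).sub (hε.comp tendsto_fst)

lemma integral_abs_mem_Icc_of_even {g : ℝ → ℝ} (hg : ∀ x, g (-x) = g x) {ε A : ℝ}
    (hε : 0 < ε) :
    ∫ η in {η : ℝ | ε ≤ |η| ∧ |η| ≤ A}, g η = 2 * ∫ η in Icc ε A, g η := by
  have hg_abs : ∀ η, g |η| = g η := fun η => by
    rcases abs_choice η with h | h <;> simp [h, hg]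
  have hS : MeasurableSet {η : ℝ | ε ≤ |η| ∧ |η| ≤ A} :=
    measurableSet_Icc.preimage measurable_abs
  calc ∫ η in {η : ℝ | ε ≤ |η| ∧ |η| ≤ A}, g η
      = ∫ η, (Icc ε A).indicator g |η| := by
        rw [← integral_indicator hS]
        congr 1 with η
        simp only [indicator, mem_Icc, hg_abs]; congr
    _ = 2 * ∫ η in Ioi 0, (Icc ε A).indicator g η := integral_comp_abs
    _ = 2 * ∫ η in Icc ε A, g η := by
        rw [setIntegral_indicator measurableSet_Icc,
          inter_eq_right.2 (show Icc ε A ⊆ Ioi 0 from fun η hη => hε.trans_le hη.1)]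

lemma integral_sin_mul_div_Icc {ε A : ℝ} (hε : 0 < ε) (hεA : ε ≤ A) (b : ℝ) :
    ∫ η in Icc ε A, Real.sin (η * b) / η = sineIntegral (A * b) - sineIntegral (ε * b) := by
  have hsinc : ∀ η ∈ uIcc ε A, Real.sin (η * b) / η = b * Real.sinc (b * η) := by
    intro η hη
    have hη0 : η ≠ 0 := (hε.trans_le (uIcc_of_le hεA ▸ hη).1).ne'
    rcases eq_or_ne b 0 with rfl | hb
    · simp
    · rw [Real.sinc_of_ne_zero (mul_ne_zero hb hη0)]
      field_simp
  have hint : ∀ x y, IntervalIntegrable Real.sinc volume x y :=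
    fun _ _ => Real.continuous_sinc.intervalIntegrable _ _
  rw [integral_Icc_eq_integral_Ioc, ← intervalIntegral.integral_of_le hεA,
    intervalIntegral.integral_congr hsinc, intervalIntegral.integral_const_mul,
    ← smul_eq_mul, intervalIntegral.smul_integral_comp_mul_left, sineIntegral, sineIntegral,
    intervalIntegral.integral_interval_sub_left (hint _ _) (hint _ _), mul_comm A, mul_comm ε]

lemma integral_sin_mul_div_annulus {ε A : ℝ} (hε : 0 < ε) (hεA : ε ≤ A) (b : ℝ) :
    ∫ η in {η : ℝ | ε ≤ |η| ∧ |η| ≤ A}, Real.sin (η * b) / η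
      = 2 * (sineIntegral (A * b) - sineIntegral (ε * b)) := by
  rw [integral_abs_mem_Icc_of_even (fun η => by rw [neg_mul, Real.sin_neg, neg_div_neg_eq]) hε,
    integral_sin_mul_div_Icc hε hεA]

lemma cexp_mul_sub_cexp_mul (a t η x : ℝ) :
    cexp (-(I * a * η)) * cexp ((t + η : ℝ) * x * I)
        - cexp (I * a * η) * cexp ((t - η : ℝ) * x * I)
      = 2 * I * (cexp (I * t * x) * Real.sin (η * (x - a))) := by
  rw [← Complex.exp_add, ← Complex.exp_add, Complex.ofReal_sin, Complex.sin,
    show -(I * a * η) + (t + η : ℝ) * x * I = I * t * x + (η * (x - a) : ℝ) * I by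
      push_cast; ring,
    show I * a * η + (t - η : ℝ) * x * I = I * t * x + -(η * (x - a) : ℝ) * I by
      push_cast; ring,
    Complex.exp_add, Complex.exp_add]
  linear_combination (cexp (I * t * x) * (cexp ((η * (x - a) : ℝ) * I)
    - cexp (-(η * (x - a) : ℝ) * I))) * I_sq

section CharFun

variable (ν : Measure ℝ) [IsFiniteMeasure ν]

lemma integrable_cexp_mul_I (s : ℝ) : Integrable (fun x : ℝ => cexp (s * x * I)) ν :=
  Integrable.of_bound (by fun_prop) 1 (ae_of_all _ fun x => by
    rw [← Complex.ofReal_mul, Complex.norm_exp_ofReal_mul_I])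

lemma charFun_shift_sub_div_eq (a t η : ℝ) :
    (cexp (-(I * a * η)) * charFun ν (t + η) - cexp (I * a * η) * charFun ν (t - η)) / η
      = 2 * I * ∫ x, cexp (I * t * x) * ((Real.sin (η * (x - a)) / η : ℝ) : ℂ) ∂ν := by
  simp only [charFun_apply_real]
  rw [← integral_const_mul, ← integral_const_mul, ← integral_sub
    ((integrable_cexp_mul_I ν _).const_mul _) ((integrable_cexp_mul_I ν _).const_mul _),
    ← integral_div, ← integral_const_mul]
  congr 1 with x
  rw [cexp_mul_sub_cexp_mul, Complex.ofReal_div]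
  ring

lemma norm_cexp_I_mul_mul (t x : ℝ) : ‖cexp (I * t * x)‖ = 1 := by
  rw [mul_assoc, ← Complex.ofReal_mul, mul_comm, Complex.norm_exp_ofReal_mul_I]

lemma integrable_annulus_prod {ε : ℝ} (hε : 0 < ε) (A a t : ℝ) :
    Integrable (Function.uncurry fun (η x : ℝ) =>
        cexp (I * t * x) * ((Real.sin (η * (x - a)) / η : ℝ) : ℂ))
      ((volume.restrict {η : ℝ | ε ≤ |η| ∧ |η| ≤ A}).prod ν) := by
  have hS : MeasurableSet {η : ℝ | ε ≤ |η| ∧ |η| ≤ A} :=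
    measurableSet_Icc.preimage measurable_abs
  have : IsFiniteMeasure (volume.restrict {η : ℝ | ε ≤ |η| ∧ |η| ≤ A}) :=
    isFiniteMeasure_restrict.2 <| ne_top_of_le_ne_top measure_Icc_lt_top.ne <|
      measure_mono (s := {η : ℝ | ε ≤ |η| ∧ |η| ≤ A}) (t := Icc (-A) A)
        fun η hη => abs_le.1 hη.2
  refine Integrable.of_bound (by fun_prop) ε⁻¹ ?_
  filter_upwards [Measure.quasiMeasurePreserving_fst.ae (ae_restrict_mem hS)] with p hp
  rw [Function.uncurry_apply_pair, norm_mul, norm_cexp_I_mul_mul, one_mul, Complex.norm_real,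
    Real.norm_eq_abs, abs_div]
  exact div_le_div₀ zero_le_one (Real.abs_sin_le_one _) hε hp.1 |>.trans_eq (one_div _)

lemma integral_annulus_charFun_eq {ε A : ℝ} (hε : 0 < ε) (hεA : ε ≤ A) (a t : ℝ) :
    ∫ η in {η : ℝ | ε ≤ |η| ∧ |η| ≤ A},
        (cexp (-(I * a * η)) * charFun ν (t + η) - cexp (I * a * η) * charFun ν (t - η)) / η
      = 2 * I * ∫ x, cexp (I * t * x) *
          ((2 * (sineIntegral (A * (x - a)) - sineIntegral (ε * (x - a))) : ℝ) : ℂ) ∂ν := by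
  simp_rw [charFun_shift_sub_div_eq]
  rw [integral_const_mul, integral_integral_swap (integrable_annulus_prod ν hε A a t)]
  congr 2 with x
  rw [integral_const_mul, integral_complex_ofReal, integral_sin_mul_div_annulus hε hεA]

lemma tendsto_integral_cexp_mul_sineIntegral_sub (a t : ℝ) :
    Tendsto (fun p : ℝ × ℝ => ∫ x, cexp (I * t * x) *
        ((2 * (sineIntegral (p.2 * (x - a)) - sineIntegral (p.1 * (x - a))) : ℝ) : ℂ) ∂ν)
      (𝓝 0 ×ˢ atTop)
      (𝓝 (∫ x, cexp (I * t * x) *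
        ((2 * (Real.pi / 2 * Real.sign (x - a)) : ℝ) : ℂ) ∂ν)) := by
  refine tendsto_integral_filter_of_dominated_convergence (fun _ => 12)
    (.of_forall fun p => (by fun_prop : Continuous _).aestronglyMeasurable)
    (.of_forall fun p => ae_of_all _ fun x => ?_) (integrable_const _) (ae_of_all _ fun x => ?_)
  · rw [norm_mul, norm_cexp_I_mul_mul, one_mul, Complex.norm_real, Real.norm_eq_abs, abs_mul,
      abs_two]
    linarith [abs_sub _ _ |>.trans (add_le_add (abs_sineIntegral_le (p.2 * (x - a)))
      (abs_sineIntegral_le (p.1 * (x - a))))]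
  · exact tendsto_const_nhds.mul (Complex.continuous_ofReal.tendsto _ |>.comp
      ((tendsto_sineIntegral_sub_sineIntegral (x - a)).const_mul 2))

theorem tendsto_integral_annulus_charFun (a t : ℝ) :
    Tendsto
      (fun p : ℝ × ℝ => (1 / (4 * Real.pi * I)) *
        ∫ η in {η : ℝ | p.1 ≤ |η| ∧ |η| ≤ p.2},
          (cexp (-(I * a * η)) * charFun ν (t + η)
            - cexp (I * a * η) * charFun ν (t - η)) / η)
      (𝓝[>] 0 ×ˢ atTop)
      (𝓝 ((1 / 2) * ∫ x, cexp (I * t * x) * (Real.sign (x - a) : ℂ) ∂ν)) := by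
  have hlim := ((tendsto_integral_cexp_mul_sineIntegral_sub ν a t).mono_left
    (prod_mono (nhdsWithin_le_nhds (s := Ioi 0)) le_rfl)).const_mul
      (1 / (4 * Real.pi * I) * (2 * I))
  have hvalue : 1 / (4 * Real.pi * I) * (2 * I) *
      ∫ x, cexp (I * t * x) * ((2 * (Real.pi / 2 * Real.sign (x - a)) : ℝ) : ℂ) ∂ν
      = (1 / 2) * ∫ x, cexp (I * t * x) * (Real.sign (x - a) : ℂ) ∂ν := by
    rw [← integral_const_mul, ← integral_const_mul]
    congr 1 with x
    push_cast
    field_simp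
    ring
  rw [← hvalue]
  refine hlim.congr' ?_
  filter_upwards [prod_mem_prod (Ioo_mem_nhdsGT one_pos) (Ici_mem_atTop 1)] with p hp
  rw [integral_annulus_charFun_eq ν hp.1.1 (hp.1.2.le.trans hp.2), mul_assoc]

end CharFun

@[fun_prop]
lemma Real.measurable_sign : Measurable Real.sign :=
  Measurable.ite (measurableSet_lt measurable_id measurable_const) measurable_const
    (Measurable.ite (measurableSet_lt measurable_const measurable_id) measurable_const
      measurable_const)

theorem pinelis_Ja_formula_general {Ω : Type*} [MeasurableSpace Ω]
    (μ : Measure Ω) [IsProbabilityMeasure μ] (X : Ω → ℝ) (hX : Measurable X)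
    (a : ℝ)
    (φ : ℝ → ℂ)
    (hφ : ∀ s : ℝ, φ s = ∫ ω, Complex.exp (Complex.I * s * X ω) ∂μ)
    (t : ℝ) :
    Tendsto
      (fun p : ℝ × ℝ =>
        (1 / (4 * Real.pi * Complex.I)) *
          ∫ η in {η : ℝ | p.1 ≤ |η| ∧ |η| ≤ p.2},
            (Complex.exp (-(Complex.I * a * η)) * φ (t + η)
              - Complex.exp (Complex.I * a * η) * φ (t - η)) / (η : ℂ))
      ((nhdsWithin 0 (Set.Ioi 0)) ×ˢ atTop)
      (nhds ((1 / 2) * ∫ ω, Complex.exp (Complex.I * t * X ω) * (Real.sign (X ω - a) : ℂ) ∂μ)) := by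
  have hφ_law : φ = charFun (μ.map X) := funext fun s => by
    rw [hφ, charFun_apply_real, integral_map hX.aemeasurable (by fun_prop)]
    simp_rw [mul_comm I, mul_right_comm]
  rw [hφ_law, ← integral_map (f := fun x => cexp (I * t * x) * (Real.sign (x - a) : ℂ))
    hX.aemeasurable (by fun_prop)]
  exact tendsto_integral_annulus_charFun (μ.map X) a t

theorem pinelis_Ja_formula {Ω : Type*} [MeasurableSpace Ω]
    (μ : Measure Ω) [IsProbabilityMeasure μ] (X : Ω → ℝ) (hX : Measurable X)
    (a : ℝ) (ha : μ {ω | X ω = a} = 0)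
    (φ : ℝ → ℂ)
    (hφ : ∀ s : ℝ, φ s = ∫ ω, Complex.exp (Complex.I * s * X ω) ∂μ)
    (t : ℝ) :
    Tendsto
      (fun p : ℝ × ℝ =>
        (1 / (4 * Real.pi * Complex.I)) *
          ∫ η in {η : ℝ | p.1 ≤ |η| ∧ |η| ≤ p.2},
            (Complex.exp (-(Complex.I * a * η)) * φ (t + η)
              - Complex.exp (Complex.I * a * η) * φ (t - η)) / (η : ℂ))
      ((nhdsWithin 0 (Set.Ioi 0)) ×ˢ atTop)
      (nhds ((1 / 2) * ∫ ω, Complex.exp (Complex.I * t * X ω) * (Real.sign (X ω - a) : ℂ) ∂μ)) :=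
  pinelis_Ja_formula_general μ X hX a φ hφ t
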